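/- arXiv:1310.7359 — 6 statements merged into one kernel-verified Lean document; each statement's English description precedes it below -/
import Mathlib

section
/- For k ≥ 2, if H is a k-uniform hypergraph with no isolated vertices, no isolated edges and no multiple edges, then 2·n(H) − n₁(H) ≥ 2k, where n₁(H) denotes the number of vertices of degree 1 in H. -/
open Finset

attribute [local instance] Classical.propDecidable

variable {V : Type*} [Fintype V] [DecidableEq V]

/-- Two vertices are adjacent (neighbors) in a hypergraph if they are distinct
and share a common edge. -/
def HAdj (E : Finset (Finset V)) (u v : V) : Prop :=
  u ≠ v ∧ ∃ e ∈ E, u ∈ e ∧ v ∈ e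

/-- A hypergraph is `k`-uniform if every edge has exactly `k` vertices. -/
def Uniform (k : ℕ) (E : Finset (Finset V)) : Prop := ∀ e ∈ E, e.card = k

/-- No edge is isolated: every edge intersects some other edge. -/
def NoIsolatedEdge (E : Finset (Finset V)) : Prop :=
  ∀ e ∈ E, ∃ f ∈ E, f ≠ e ∧ ∃ v, v ∈ e ∧ v ∈ f

/-- The degree of a vertex: the number of edges containing it. -/
def hdeg (E : Finset (Finset V)) (v : V) : ℕ := (E.filter (fun e => v ∈ e)).card

/-- The number of vertices of degree exactly 1. -/
noncomputable def n1 (E : Finset (Finset V)) : ℕ :=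
  (univ.filter (fun v => hdeg E v = 1)).card

/-- The total domination number: minimum size of a set `D` such that every
vertex has a neighbor in `D`. -/
noncomputable def gammat (E : Finset (Finset V)) : ℕ :=
  sInf {n | ∃ D : Finset V, (∀ v : V, ∃ u ∈ D, HAdj E v u) ∧ D.card = n}

/-- The transversal number: minimum size of a vertex set meeting every edge. -/
noncomputable def tauh (E : Finset (Finset V)) : ℕ :=
  sInf {n | ∃ T : Finset V, (∀ e ∈ E, ∃ v ∈ T, v ∈ e) ∧ T.card = n}

/-- The total transversal number: minimum size of a transversal `T` in which
every vertex of `T` has a neighbor in `T`. -/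
noncomputable def taut (E : Finset (Finset V)) : ℕ :=
  sInf {n | ∃ T : Finset V, (∀ e ∈ E, ∃ v ∈ T, v ∈ e) ∧
    (∀ v ∈ T, ∃ u ∈ T, HAdj E v u) ∧ T.card = n}

/-- The strong transversal number: minimum size of a vertex set containing at
least two vertices from every edge. -/
noncomputable def tau2 (E : Finset (Finset V)) : ℕ :=
  sInf {n | ∃ T : Finset V, (∀ e ∈ E, 2 ≤ (e ∩ T).card) ∧ T.card = n}

/-! Take an edge `e` and a second edge `f`. Then `|e ∪ f| + |e ∩ f| = 2k`; the union has at most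
`n(H)` vertices, and the vertices of `e ∩ f` have degree at least `2`, so `n₁(H) + |e ∩ f| ≤ n(H)`. -/

lemma two_le_hdeg_of_mem_inter {α : Type*} [DecidableEq α] {E : Finset (Finset α)} {e f : Finset α}
    (he : e ∈ E) (hf : f ∈ E) (hne : e ≠ f) {v : α} (hv : v ∈ e ∩ f) : 2 ≤ hdeg E v := by
  rw [mem_inter] at hv
  have hpair : ({e, f} : Finset (Finset α)) ⊆ E.filter (fun g => v ∈ g) := by
    intro g hg
    rcases mem_insert.1 hg with rfl | hg
    · exact mem_filter.2 ⟨he, hv.1⟩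
    · rw [mem_singleton.1 hg]; exact mem_filter.2 ⟨hf, hv.2⟩
  calc 2 = ({e, f} : Finset (Finset α)).card := (card_pair hne).symm
    _ ≤ hdeg E v := card_le_card hpair

lemma n1_add_card_le_of_two_le_hdeg (E : Finset (Finset V)) (S : Finset V)
    (hS : ∀ v ∈ S, 2 ≤ hdeg E v) : n1 E + S.card ≤ Fintype.card V := by
  have hdisj : Disjoint (univ.filter (fun v => hdeg E v = 1)) S := by
    rw [disjoint_left]
    intro v hv hvS
    have := hS v hvS
    rw [(mem_filter.1 hv).2] at this
    omega
  rw [n1, ← card_union_of_disjoint hdisj]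
  exact card_le_univ _

theorem stmt3_general [Nonempty V] (k : ℕ) (E : Finset (Finset V))
    (hu : Uniform k E)
    (hv : ∀ v : V, ∃ e ∈ E, v ∈ e)
    (he : NoIsolatedEdge E) :
    2 * k ≤ 2 * Fintype.card V - n1 E := by
  obtain ⟨e, heE, -⟩ := hv (Classical.arbitrary V)
  obtain ⟨f, hfE, hfe, -⟩ := he e heE
  have hunion_inter : (e ∪ f).card + (e ∩ f).card = 2 * k := by
    rw [card_union_add_card_inter, hu e heE, hu f hfE, two_mul]
  have hunion : (e ∪ f).card ≤ Fintype.card V := card_le_univ _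
  have hinter : n1 E + (e ∩ f).card ≤ Fintype.card V :=
    n1_add_card_le_of_two_le_hdeg E _ fun v hv =>
      two_le_hdeg_of_mem_inter heE hfE (Ne.symm hfe) hv
  omega

/-- For `k ≥ 2`, if `H` is a `k`-uniform hypergraph with no isolated vertices,
no isolated edges (and no multiple edges), then `2·n(H) − n₁(H) ≥ 2k`. -/
theorem stmt3 [Nonempty V] (k : ℕ) (hk : 2 ≤ k) (E : Finset (Finset V))
    (hu : Uniform k E)
    (hv : ∀ v : V, ∃ e ∈ E, v ∈ e)
    (he : NoIsolatedEdge E) :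
    2 * k ≤ 2 * Fintype.card V - n1 E :=
  stmt3_general k E hu hv he
end

section
/- Let k ≥ 2, let F be a k-uniform hypergraph with no isolated vertices, no isolated edges and no multiple edges, and let H be obtained from F by adding, for each vertex v of F, k new vertices v₁,…,v_k and two new k-edges {v,v₁,…,v_{k−1}} and {v₁,…,v_k}. Then γ_t(H) = 2·n(H)/(k+1). -/
open Finset

attribute [local instance] Classical.propDecidable

variable {V : Type*} [Fintype V] [DecidableEq V]

/-- For a vertex `v` of `F`, the added edge `{v, v₁, …, v_{k−1}}`, where the new
vertex `v_j` (for `1 ≤ j ≤ k`) is encoded as `Sum.inr (v, j-1)`. -/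
noncomputable def pendant1 {α : Type*} (k : ℕ) (v : α) : Finset (α ⊕ α × Fin k) :=
  insert (Sum.inl v)
    ((univ.filter (fun i : Fin k => (i : ℕ) < k - 1)).image (fun i => Sum.inr (v, i)))

/-- For a vertex `v` of `F`, the added edge `{v₁, …, v_k}`. -/
noncomputable def pendant2 {α : Type*} (k : ℕ) (v : α) : Finset (α ⊕ α × Fin k) :=
  univ.image (fun i : Fin k => Sum.inr (v, i))

/-!
Every vertex `v` of `F` owns the block `{v, v₁, …, v_k}`, and every edge through an added
vertex `vᵢ` stays inside that block. The vertex `v_k` lies only in `{v₁, …, v_k}`, so a total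
dominating set contains some `vⱼ`, and `vⱼ` in turn needs a neighbour in the set, again in the
block of `v`. Hence every block carries two vertices of the set, giving `γ_t(H) ≥ 2·n(F)`;
conversely `V(F) ∪ {v₁ : v ∈ V(F)}` is a total dominating set of that size.
-/

def IsTotalDominating {β : Type*} (E : Finset (Finset β)) (D : Finset β) : Prop :=
  ∀ v, ∃ u ∈ D, HAdj E v u

theorem gammat_eq_of_isTotalDominating {β : Type*} {E : Finset (Finset β)} {D : Finset β}
    {m : ℕ} (hD : IsTotalDominating E D) (hcard : D.card = m)
    (hmin : ∀ D', IsTotalDominating E D' → m ≤ D'.card) : gammat E = m :=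
  le_antisymm (Nat.sInf_le ⟨D, hD, hcard⟩)
    (le_csInf ⟨m, D, hD, hcard⟩ (by rintro _ ⟨D', hD', rfl⟩; exact hmin D' hD'))

namespace Corona

variable {α : Type*} {k : ℕ}

noncomputable def edges [Fintype α] [DecidableEq α] (k : ℕ) (EF : Finset (Finset α)) :
    Finset (Finset (α ⊕ α × Fin k)) :=
  EF.image (fun e => e.image Sum.inl) ∪ univ.image (pendant1 k) ∪ univ.image (pendant2 k)

def root : α ⊕ α × Fin k → α := Sum.elim id Prod.fst

theorem mem_edges [Fintype α] [DecidableEq α] {EF : Finset (Finset α)}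
    {e : Finset (α ⊕ α × Fin k)} :
    e ∈ edges k EF ↔
      (∃ f ∈ EF, f.image Sum.inl = e) ∨ (∃ v, pendant1 k v = e) ∨ ∃ v, pendant2 k v = e := by
  simp [edges]

theorem mem_pendant1 {v : α} {x : α ⊕ α × Fin k} :
    x ∈ pendant1 k v ↔ x = Sum.inl v ∨ ∃ i : Fin k, (i : ℕ) < k - 1 ∧ x = Sum.inr (v, i) := by
  simp [pendant1, eq_comm]

theorem mem_pendant2 {v : α} {x : α ⊕ α × Fin k} :
    x ∈ pendant2 k v ↔ ∃ i : Fin k, x = Sum.inr (v, i) := by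
  simp [pendant2, eq_comm]

theorem root_eq_of_mem_pendant1 {v : α} {x : α ⊕ α × Fin k} (hx : x ∈ pendant1 k v) :
    root x = v := by
  rcases mem_pendant1.mp hx with rfl | ⟨i, -, rfl⟩ <;> rfl

theorem root_eq_of_mem_pendant2 {v : α} {x : α ⊕ α × Fin k} (hx : x ∈ pendant2 k v) :
    root x = v := by
  obtain ⟨i, rfl⟩ := mem_pendant2.mp hx
  rfl

variable [Fintype α] [DecidableEq α] {EF : Finset (Finset α)}

theorem root_eq_of_hAdj_inr {v : α} {i : Fin k} {u : α ⊕ α × Fin k}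
    (h : HAdj (edges k EF) (Sum.inr (v, i)) u) : root u = v := by
  obtain ⟨-, e, he, hx, hu⟩ := h
  rcases mem_edges.mp he with ⟨f, -, rfl⟩ | ⟨w, rfl⟩ | ⟨w, rfl⟩
  · simp at hx
  · exact (root_eq_of_mem_pendant1 hu).trans (root_eq_of_mem_pendant1 hx).symm
  · exact (root_eq_of_mem_pendant2 hu).trans (root_eq_of_mem_pendant2 hx).symm

theorem exists_eq_inr_of_hAdj_last {v : α} {u : α ⊕ α × Fin k} (hk : 0 < k)
    (h : HAdj (edges k EF) (Sum.inr (v, ⟨k - 1, by omega⟩)) u) :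
    ∃ j : Fin k, u = Sum.inr (v, j) := by
  obtain ⟨-, e, he, hx, hu⟩ := h
  rcases mem_edges.mp he with ⟨f, -, rfl⟩ | ⟨w, rfl⟩ | ⟨w, rfl⟩
  · simp at hx
  · simp [mem_pendant1] at hx
  · obtain rfl : w = v := (root_eq_of_mem_pendant2 hx).symm
    exact mem_pendant2.mp hu

theorem two_le_card_filter_root {D : Finset (α ⊕ α × Fin k)} (hk : 0 < k)
    (hD : IsTotalDominating (edges k EF) D) (v : α) :
    2 ≤ (D.filter (root · = v)).card := by
  obtain ⟨x, hxD, hx⟩ := hD (Sum.inr (v, ⟨k - 1, by omega⟩))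
  obtain ⟨j, rfl⟩ := exists_eq_inr_of_hAdj_last hk hx
  obtain ⟨y, hyD, hy⟩ := hD (Sum.inr (v, j))
  exact one_lt_card.mpr ⟨_, mem_filter.mpr ⟨hxD, rfl⟩, y,
    mem_filter.mpr ⟨hyD, root_eq_of_hAdj_inr hy⟩, hy.1⟩

theorem two_mul_card_le_of_isTotalDominating {D : Finset (α ⊕ α × Fin k)} (hk : 0 < k)
    (hD : IsTotalDominating (edges k EF) D) : 2 * Fintype.card α ≤ D.card :=
  calc 2 * Fintype.card α = ∑ _v : α, 2 := by simp [mul_comm]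
    _ ≤ ∑ v : α, (D.filter (root · = v)).card :=
        sum_le_sum fun v _ => two_le_card_filter_root hk hD v
    _ = D.card := (card_eq_sum_card_fiberwise fun _ _ => mem_univ _).symm

def dominator (k : ℕ) (hk : 0 < k) : Finset (α ⊕ α × Fin k) :=
  univ.image Sum.inl ∪ univ.image fun v => Sum.inr (v, ⟨0, hk⟩)

theorem isTotalDominating_dominator (hk : 2 ≤ k) :
    IsTotalDominating (edges k EF) (dominator k (by omega)) := by
  have hp1 : ∀ v, pendant1 k v ∈ edges k EF := fun v => mem_edges.mpr (.inr (.inl ⟨v, rfl⟩))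
  have hp2 : ∀ v, pendant2 k v ∈ edges k EF := fun v => mem_edges.mpr (.inr (.inr ⟨v, rfl⟩))
  have hv₁ : ∀ v : α, Sum.inr (v, ⟨0, by omega⟩) ∈ pendant1 k v := fun v =>
    mem_pendant1.mpr (.inr ⟨_, by simp only; omega, rfl⟩)
  rintro (v | ⟨v, i⟩)
  · exact ⟨_, by simp [dominator], by simp, _, hp1 v, mem_pendant1.mpr (.inl rfl), hv₁ v⟩
  · by_cases hi : (i : ℕ) = 0
    · rw [show i = ⟨0, by omega⟩ from Fin.ext hi]
      exact ⟨_, by simp [dominator], by simp, _, hp1 v, hv₁ v, mem_pendant1.mpr (.inl rfl)⟩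
    · exact ⟨Sum.inr (v, ⟨0, by omega⟩), by simp [dominator], by simp [Fin.ext_iff, hi], _,
        hp2 v, mem_pendant2.mpr ⟨i, rfl⟩, mem_pendant2.mpr ⟨_, rfl⟩⟩

theorem card_dominator (hk : 0 < k) :
    (dominator (α := α) k hk).card = 2 * Fintype.card α := by
  rw [dominator, card_union_of_disjoint (by simp [disjoint_left]),
    card_image_of_injective _ Sum.inl_injective,
    card_image_of_injective _ fun a b h => by simpa using h, card_univ]
  ring

theorem gammat_edges (hk : 2 ≤ k) : gammat (edges k EF) = 2 * Fintype.card α :=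
  gammat_eq_of_isTotalDominating (isTotalDominating_dominator hk) (card_dominator _)
    fun _ hD => two_mul_card_le_of_isTotalDominating (by omega) hD

end Corona

theorem stmt4_general {α : Type*} [Fintype α] [DecidableEq α] (k : ℕ) (hk : 2 ≤ k)
    (EF : Finset (Finset α)) :
    (gammat (EF.image (fun e => e.image Sum.inl) ∪
        univ.image (pendant1 k) ∪ univ.image (pendant2 k)) : ℝ) =
      2 * Fintype.card (α ⊕ α × Fin k) / (k + 1) := by
  rw [← Corona.edges, Corona.gammat_edges hk, Fintype.card_sum, Fintype.card_prod,
    Fintype.card_fin]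
  field_simp
  push_cast
  ring

/-- Let `k ≥ 2`, let `F` be a `k`-uniform hypergraph with no isolated vertices,
no isolated edges and no multiple edges, and let `H` be obtained from `F` by
adding, for each vertex `v` of `F`, `k` new vertices `v₁, …, v_k` and the two new
`k`-edges `{v, v₁, …, v_{k−1}}` and `{v₁, …, v_k}`. Then
`γ_t(H) = 2·n(H)/(k+1)`. -/
theorem stmt4 {α : Type*} [Fintype α] [DecidableEq α] (k : ℕ) (hk : 2 ≤ k)
    (EF : Finset (Finset α)) (hu : Uniform k EF)
    (hv : ∀ v : α, ∃ e ∈ EF, v ∈ e) (he : NoIsolatedEdge EF) :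
    (gammat (EF.image (fun e => e.image Sum.inl) ∪
        univ.image (pendant1 k) ∪ univ.image (pendant2 k)) : ℝ) =
      2 * Fintype.card (α ⊕ α × Fin k) / (k + 1) :=
  stmt4_general k hk EF
end

section
/- If H is a linear 2-regular hypergraph (every vertex has degree exactly 2, every two edges share at most one vertex), then the total transversal number of H equals the minimum size of a total edge-cover of the dual graph G_H of H. -/
/-! In a 2-regular hypergraph every vertex `v` lies in exactly two edges, so it determines an edge
`dualEdge v` of the dual graph, and `e` is an endpoint of `dualEdge v` exactly when `v ∈ e`.
Linearity makes `v ↦ dualEdge v` injective, and every edge of the dual graph arises this way, so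
it is a bijection from the vertices of `H` onto the edges of `G_H`. It turns transversals into
edge covers, and two vertices are neighbours in `H` iff their dual edges are distinct and share an
endpoint, so total transversals correspond to total edge covers of the same size. -/

open Finset

attribute [local instance] Classical.propDecidable

variable {V : Type*} [Fintype V] [DecidableEq V]

/-- The dual graph of a linear hypergraph: vertices are the edges of `H`, with
two edges of `H` adjacent iff they share a vertex of `H`. -/
def dualGraph (E : Finset (Finset V)) : SimpleGraph {e // e ∈ E} where
  Adj e f := e ≠ f ∧ ∃ v : V, v ∈ e.1 ∧ v ∈ f.1
  symm := by
    constructor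
    rintro e f ⟨h, v, hv1, hv2⟩
    exact ⟨h.symm, v, hv2, hv1⟩
  loopless := by
    constructor
    intro e h
    exact h.1 rfl

/-- The minimum size of a total edge-cover of a graph `G`: a set of edges of `G`
covering every vertex, in which no edge is isolated (every edge of the set
shares an endpoint with another edge of the set). -/
noncomputable def ect {W : Type*} (G : SimpleGraph W) : ℕ :=
  sInf {n | ∃ S : Finset (Sym2 W), (∀ s ∈ S, s ∈ G.edgeSet) ∧
    (∀ w : W, ∃ s ∈ S, w ∈ s) ∧
    (∀ s ∈ S, ∃ t ∈ S, t ≠ s ∧ ∃ w : W, w ∈ s ∧ w ∈ t) ∧ S.card = n}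

theorem Finset.exists_sym2_mem_iff_of_card_eq_two {α : Type*} {A : Finset α} (hA : A.card = 2) :
    ∃ z : Sym2 α, ¬ z.IsDiag ∧ ∀ a, a ∈ z ↔ a ∈ A := by
  obtain ⟨a, b, hab, rfl⟩ := Finset.card_eq_two.1 hA
  exact ⟨s(a, b), by simpa using hab, by simp⟩

theorem Finset.exists_card_eq_iff_of_image {α β : Type*} [DecidableEq β] {f : α → β}
    (hf : Function.Injective f) {P : Finset α → Prop} {Q : Finset β → Prop}
    (hQ : ∀ S, Q S → ↑S ⊆ Set.range f) (hPQ : ∀ T, Q (T.image f) ↔ P T) (n : ℕ) :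
    (∃ T, P T ∧ T.card = n) ↔ ∃ S, Q S ∧ S.card = n := by
  constructor
  · rintro ⟨T, hT, rfl⟩
    exact ⟨T.image f, (hPQ T).2 hT, card_image_of_injective T hf⟩
  · rintro ⟨S, hS, rfl⟩
    obtain ⟨T, -, rfl⟩ := subset_set_image_iff.1 (Set.image_univ (f := f) ▸ hQ S hS)
    exact ⟨T, (hPQ T).1 hS, (card_image_of_injective T hf).symm⟩

def SimpleGraph.IsTotalEdgeCover {W : Type*} (G : SimpleGraph W) (S : Finset (Sym2 W)) : Prop :=
  (∀ s ∈ S, s ∈ G.edgeSet) ∧ (∀ w : W, ∃ s ∈ S, w ∈ s) ∧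
    ∀ s ∈ S, ∃ t ∈ S, t ≠ s ∧ ∃ w : W, w ∈ s ∧ w ∈ t

theorem ect_eq_sInf {W : Type*} (G : SimpleGraph W) :
    ect G = sInf {n | ∃ S, G.IsTotalEdgeCover S ∧ S.card = n} := by
  simp only [ect, SimpleGraph.IsTotalEdgeCover, and_assoc]

section DualEdge

variable {α : Type*}

def IsTotalTransversal (E : Finset (Finset α)) (T : Finset α) : Prop :=
  (∀ e ∈ E, ∃ v ∈ T, v ∈ e) ∧ ∀ v ∈ T, ∃ u ∈ T, HAdj E v u

theorem taut_eq_sInf (E : Finset (Finset α)) :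
    taut E = sInf {n | ∃ T, IsTotalTransversal E T ∧ T.card = n} := by
  simp only [taut, IsTotalTransversal, and_assoc]

variable [DecidableEq α] {E : Finset (Finset α)}

theorem card_filter_attach_mem_eq_hdeg (v : α) :
    (E.attach.filter fun e => v ∈ e.1).card = hdeg E v := by
  rw [filter_attach (fun e => v ∈ e), card_map, card_attach, hdeg]

theorem exists_dualEdge (hreg : ∀ v : α, hdeg E v = 2) (v : α) :
    ∃ z : Sym2 {e // e ∈ E}, ¬ z.IsDiag ∧ ∀ e, e ∈ z ↔ v ∈ e.1 := by
  obtain ⟨z, hz, hmem⟩ := exists_sym2_mem_iff_of_card_eq_two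
    ((card_filter_attach_mem_eq_hdeg v).trans (hreg v))
  exact ⟨z, hz, fun e => by simp [hmem]⟩

noncomputable def dualEdge (hreg : ∀ v : α, hdeg E v = 2) (v : α) : Sym2 {e // e ∈ E} :=
  (exists_dualEdge hreg v).choose

variable (hreg : ∀ v : α, hdeg E v = 2)

theorem not_isDiag_dualEdge (v : α) : ¬ (dualEdge hreg v).IsDiag :=
  (exists_dualEdge hreg v).choose_spec.1

@[simp]
theorem mem_dualEdge {v : α} {e : {e // e ∈ E}} : e ∈ dualEdge hreg v ↔ v ∈ e.1 :=
  (exists_dualEdge hreg v).choose_spec.2 e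

theorem dualEdge_mem_edgeSet (v : α) : dualEdge hreg v ∈ (dualGraph E).edgeSet := by
  induction h : dualEdge hreg v with
  | h a b =>
    have hab : a ≠ b := by simpa [h] using not_isDiag_dualEdge hreg v
    have hva : v ∈ a.1 := (mem_dualEdge hreg).1 (h ▸ Sym2.mem_mk_left a b)
    have hvb : v ∈ b.1 := (mem_dualEdge hreg).1 (h ▸ Sym2.mem_mk_right a b)
    exact ⟨hab, v, hva, hvb⟩

theorem dualEdge_injective (hlin : ∀ e ∈ E, ∀ f ∈ E, e ≠ f → (e ∩ f).card ≤ 1) :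
    Function.Injective (dualEdge hreg) := by
  intro u v huv
  by_contra hne
  induction h : dualEdge hreg v with
  | h a b =>
    have hab : a ≠ b := by simpa [h] using not_isDiag_dualEdge hreg v
    have hsub : {u, v} ⊆ a.1 ∩ b.1 := by
      simp [insert_subset_iff, ← mem_dualEdge hreg, huv, h]
    have hcard : 2 ≤ (a.1 ∩ b.1).card := card_pair hne ▸ card_le_card hsub
    exact (hlin a a.2 b b.2 (Subtype.coe_ne_coe.2 hab)).not_gt hcard

theorem exists_dualEdge_eq {z : Sym2 {e // e ∈ E}} (hz : z ∈ (dualGraph E).edgeSet) :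
    ∃ v, dualEdge hreg v = z := by
  induction z with
  | h a b =>
    obtain ⟨hab, v, hva, hvb⟩ := hz
    exact ⟨v, (Sym2.mem_and_mem_iff hab).1
      ⟨(mem_dualEdge hreg).2 hva, (mem_dualEdge hreg).2 hvb⟩⟩

theorem isTotalEdgeCover_image_dualEdge_iff
    (hlin : ∀ e ∈ E, ∀ f ∈ E, e ≠ f → (e ∩ f).card ≤ 1) (T : Finset α) :
    (dualGraph E).IsTotalEdgeCover (T.image (dualEdge hreg)) ↔ IsTotalTransversal E T := by
  simp only [SimpleGraph.IsTotalEdgeCover, IsTotalTransversal, HAdj, forall_mem_image,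
    exists_mem_image, dualEdge_mem_edgeSet, Subtype.forall, Subtype.exists, mem_dualEdge,
    (dualEdge_injective hreg hlin).ne_iff, ne_comm, implies_true, true_and, exists_prop]

end DualEdge

/-- If `H` is a linear 2-regular hypergraph, then the total transversal number
of `H` equals the minimum size of a total edge-cover of the dual graph of `H`. -/
theorem stmt5 (E : Finset (Finset V))
    (hreg : ∀ v : V, hdeg E v = 2)
    (hlin : ∀ e ∈ E, ∀ f ∈ E, e ≠ f → (e ∩ f).card ≤ 1) :
    taut E = ect (dualGraph E) := by
  rw [taut_eq_sInf, ect_eq_sInf]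
  congr 1
  ext n
  refine exists_card_eq_iff_of_image (dualEdge_injective hreg hlin) ?_
    (isTotalEdgeCover_image_dualEdge_iff hreg hlin) n
  rintro S ⟨hS, -⟩ z hz
  exact exists_dualEdge_eq hreg (hS z hz)
end

section
/- If H is a 2-uniform hypergraph (a graph) with no isolated vertices, no isolated edges and no multiple edges, then τ_t(H) ≤ 2(n(H) + m(H))/5. -/
open Finset

attribute [local instance] Classical.propDecidable

variable {V : Type*} [Fintype V] [DecidableEq V]

/-!
Induction on the number of edges, over all graphs, with the stronger invariant
`5 τ_t ≤ 2 n + 2 m + 4 k`, where `n` counts only the vertices lying on edges and `k` is the number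
of isolated edges. An isolated edge is taken whole into the transversal and removed. If some edge
`uv` meets at least two other edges, take `u` and `v`, delete every edge at `u` or `v`, and recurse
on what remains after also setting aside the edges this leaves isolated: each of those met a
deleted edge, so one of its ends is adjacent to `u` or `v` and covers it. Otherwise every edge
meets exactly one other, so the graph falls apart into paths with two edges, and the two ends of
either edge of such a path cover it.
-/

theorem Uniform.mono {α : Type*} {k : ℕ} {E E' : Finset (Finset α)} (hu : Uniform k E)
    (h : E' ⊆ E) : Uniform k E' :=
  fun e he => hu e (h he)

theorem HAdj.mono {α : Type*} {E E' : Finset (Finset α)} {u v : α} (h : E' ⊆ E)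
    (huv : HAdj E' u v) : HAdj E u v :=
  let ⟨hne, e, he, hu, hv⟩ := huv
  ⟨hne, e, h he, hu, hv⟩

namespace Hypergraph

variable {α : Type*} {E E' : Finset (Finset α)} {e f : Finset α}

theorem not_disjoint_self_of_card_eq_two (he : #e = 2) : ¬Disjoint e e := by
  rw [disjoint_self_iff_empty]
  rintro rfl
  simp at he

theorem exists_hAdj_of_card_eq_two {v : α} (he : e ∈ E) (hc : #e = 2) (hv : v ∈ e) :
    ∃ u ∈ e, HAdj E v u := by
  obtain ⟨u, hu, huv⟩ := exists_mem_ne (by omega : 1 < #e) v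
  exact ⟨u, hu, huv.symm, e, he, hv, hu⟩

variable [DecidableEq α]

def support (E : Finset (Finset α)) : Finset α := E.biUnion id

def isolatedEdges (E : Finset (Finset α)) : Finset (Finset α) :=
  E.filter fun e => ∀ f ∈ E, f ≠ e → Disjoint e f

def edgesMeeting (E : Finset (Finset α)) (e : Finset α) : Finset (Finset α) :=
  E.filter fun f => ¬Disjoint f e

def IsTotalTransversal (E : Finset (Finset α)) (T : Finset α) : Prop :=
  (∀ e ∈ E, ∃ v ∈ T, v ∈ e) ∧ ∀ v ∈ T, ∃ u ∈ T, HAdj E v u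

/-- An isolated edge needs both of its ends in a total transversal but carries only `6` through its
vertices and itself, hence the extra `4` per isolated edge. -/
def weight (E : Finset (Finset α)) : ℕ :=
  2 * #(support E) + 2 * #E + 4 * #(isolatedEdges E)

def HasLightTotalTransversal (E : Finset (Finset α)) : Prop :=
  ∃ T, IsTotalTransversal E T ∧ 5 * #T ≤ weight E

theorem mem_isolatedEdges :
    e ∈ isolatedEdges E ↔ e ∈ E ∧ ∀ f ∈ E, f ≠ e → Disjoint e f :=
  mem_filter

theorem isolatedEdges_eq_empty (h : NoIsolatedEdge E) : isolatedEdges E = ∅ := by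
  refine filter_eq_empty_iff.2 fun e he hiso => ?_
  obtain ⟨f, hf, hfe, v, hve, hvf⟩ := h e he
  exact disjoint_left.1 (hiso f hf hfe) hve hvf

theorem isolatedEdges_sdiff_isolatedEdges : isolatedEdges (E \ isolatedEdges E) = ∅ := by
  refine filter_eq_empty_iff.2 fun g hg hiso => ?_
  obtain ⟨hgE, hgI⟩ := mem_sdiff.1 hg
  refine hgI (mem_isolatedEdges.2 ⟨hgE, fun f hf hfg => ?_⟩)
  by_cases hfI : f ∈ isolatedEdges E
  · exact ((mem_isolatedEdges.1 hfI).2 g hgE (Ne.symm hfg)).symm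
  · exact hiso f (mem_sdiff.2 ⟨hf, hfI⟩) hfg

theorem subset_support (he : e ∈ E) : e ⊆ support E :=
  subset_biUnion_of_mem id he

theorem support_mono (h : E' ⊆ E) : support E' ⊆ support E :=
  biUnion_subset_biUnion_of_subset_left id h

theorem card_support_add_card_le {A : Finset α} (h : E' ⊆ E) (hA : A ⊆ support E)
    (hdisj : Disjoint (support E') A) : #(support E') + #A ≤ #(support E) := by
  rw [← card_union_of_disjoint hdisj]
  exact card_le_card (union_subset (support_mono h) hA)

theorem card_support_isolatedEdges {k : ℕ} (hu : Uniform k E) :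
    #(support (isolatedEdges E)) = k * #(isolatedEdges E) := by
  have hdisj : (isolatedEdges E : Set (Finset α)).PairwiseDisjoint id :=
    fun e he f _ hef => ((mem_isolatedEdges.1 he).2 f (mem_filter.1 ‹_›).1 hef.symm)
  rw [support, card_biUnion hdisj, mul_comm]
  exact sum_const_nat fun e he => hu e (mem_isolatedEdges.1 he).1

theorem card_union_eq_three (he : #e = 2) (hf : #f = 2) (hef : e ≠ f) (hmeet : ¬Disjoint e f) :
    #(e ∪ f) = 3 := by
  have hpos : 0 < #(e ∩ f) := card_pos.2 (not_disjoint_iff_nonempty_inter.1 hmeet)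
  have hlt : #(e ∩ f) < #e := card_lt_card ⟨inter_subset_left, fun h =>
    hef (eq_of_subset_of_card_le (h.trans inter_subset_right) (by omega))⟩
  have := card_union_add_card_inter e f
  omega

theorem isolatedEdges_union {A B : Finset (Finset α)} (hsep : ∀ a ∈ A, ∀ b ∈ B, Disjoint a b) :
    isolatedEdges (A ∪ B) = isolatedEdges A ∪ isolatedEdges B := by
  ext g
  simp only [mem_union, mem_isolatedEdges]
  constructor
  · rintro ⟨hg | hg, hiso⟩
    · exact Or.inl ⟨hg, fun f hf => hiso f (Or.inl hf)⟩
    · exact Or.inr ⟨hg, fun f hf => hiso f (Or.inr hf)⟩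
  · rintro (⟨hg, hiso⟩ | ⟨hg, hiso⟩)
    · exact ⟨Or.inl hg, fun f hf hfg => hf.elim (hiso f · hfg) (hsep g hg f)⟩
    · exact ⟨Or.inr hg, fun f hf hfg => hf.elim (fun hf => (hsep f hf g hg).symm) (hiso f · hfg)⟩

theorem weight_union {A B : Finset (Finset α)} (hAB : Disjoint A B)
    (hsep : ∀ a ∈ A, ∀ b ∈ B, Disjoint a b) : weight (A ∪ B) = weight A + weight B := by
  have hsupp : Disjoint (support A) (support B) :=
    (disjoint_biUnion_left _ _ _).2 fun a ha => (disjoint_biUnion_right _ _ _).2 (hsep a ha)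
  have hiso : Disjoint (isolatedEdges A) (isolatedEdges B) :=
    disjoint_of_subset_left (filter_subset _ _) (disjoint_of_subset_right (filter_subset _ _) hAB)
  rw [weight, weight, weight, isolatedEdges_union hsep, support, union_biUnion, ← support,
    ← support, card_union_of_disjoint hsupp, card_union_of_disjoint hAB,
    card_union_of_disjoint hiso]
  ring

theorem weight_singleton (he : #e = 2) : weight {e} = 10 := by
  have hiso : isolatedEdges {e} = {e} := filter_true_of_mem fun g hg f hf hfg =>
    absurd ((mem_singleton.1 hf).trans (mem_singleton.1 hg).symm) hfg
  simp [weight, support, hiso, he]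

theorem weight_pair (he : #e = 2) (hf : #f = 2) (hef : e ≠ f) (hmeet : ¬Disjoint e f) :
    weight {e, f} = 10 := by
  have hiso : isolatedEdges {e, f} = ∅ := by
    refine filter_eq_empty_iff.2 fun g hg hg' => ?_
    rcases mem_insert.1 hg with rfl | hg
    · exact hmeet (hg' f (by simp) hef.symm)
    · rw [mem_singleton.1 hg] at hg'
      exact hmeet (hg' e (by simp) hef).symm
  have hsupp : support {e, f} = e ∪ f := by simp [support]
  rw [weight, hsupp, hiso, card_union_eq_three he hf hef hmeet, card_pair hef]
  rfl

theorem IsTotalTransversal.union {T S : Finset α} (h : E' ⊆ E) (hT : IsTotalTransversal E' T)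
    (hcover : ∀ g ∈ E, g ∉ E' → ∃ v ∈ S, v ∈ g) (hS : ∀ v ∈ S, ∃ u ∈ S, HAdj E v u) :
    IsTotalTransversal E (T ∪ S) := by
  refine ⟨fun g hg => ?_, fun v hv => ?_⟩
  · by_cases hg' : g ∈ E'
    · obtain ⟨v, hv, hvg⟩ := hT.1 g hg'
      exact ⟨v, mem_union_left _ hv, hvg⟩
    · obtain ⟨v, hv, hvg⟩ := hcover g hg hg'
      exact ⟨v, mem_union_right _ hv, hvg⟩
  · rcases mem_union.1 hv with hv | hv
    · obtain ⟨u, hu, huv⟩ := hT.2 v hv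
      exact ⟨u, mem_union_left _ hu, huv.mono h⟩
    · obtain ⟨u, hu, huv⟩ := hS v hv
      exact ⟨u, mem_union_right _ hu, huv⟩

theorem HasLightTotalTransversal.of_subset {S : Finset α} (h : E' ⊆ E)
    (h' : HasLightTotalTransversal E')
    (hcover : ∀ g ∈ E, g ∉ E' → ∃ v ∈ S, v ∈ g) (hS : ∀ v ∈ S, ∃ u ∈ S, HAdj E v u)
    (hw : 5 * #S + weight E' ≤ weight E) :
    HasLightTotalTransversal E := by
  obtain ⟨T, hT, hTw⟩ := h'
  refine ⟨T ∪ S, hT.union h hcover hS, ?_⟩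
  have := card_union_le T S
  omega

theorem HasLightTotalTransversal.of_separated {C : Finset (Finset α)} (hC : C ⊆ E) (he : e ∈ C)
    (hc : #e = 2) (hsep : ∀ g ∈ E \ C, ∀ c ∈ C, Disjoint g c) (hmeet : ∀ c ∈ C, ¬Disjoint c e)
    (hw : 10 ≤ weight C) (ih : ∀ E' ⊂ E, HasLightTotalTransversal E') :
    HasLightTotalTransversal E := by
  have hsplit : weight (E \ C) + weight C = weight E := by
    rw [← weight_union disjoint_sdiff_self_left hsep, sdiff_union_of_subset hC]
  refine .of_subset (S := e) sdiff_subset (ih _ (sdiff_ssubset hC ⟨e, he⟩))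
    (fun g hg hg' => ?_) (fun v hv => exists_hAdj_of_card_eq_two (hC he) hc hv) (by omega)
  have hgC : g ∈ C := by simpa [hg] using hg'
  obtain ⟨v, hvg, hve⟩ := not_disjoint_iff.1 (hmeet g hgC)
  exact ⟨v, hve, hvg⟩

theorem HasLightTotalTransversal.of_mem_isolatedEdges (hu : Uniform 2 E)
    (he : e ∈ isolatedEdges E) (ih : ∀ E' ⊂ E, HasLightTotalTransversal E') :
    HasLightTotalTransversal E := by
  obtain ⟨heE, hiso⟩ := mem_isolatedEdges.1 he
  have hc : #e = 2 := hu e heE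
  refine .of_separated (singleton_subset_iff.2 heE) (mem_singleton_self e) hc
    (fun g hg c hc => ?_) (fun c hc' => ?_) (weight_singleton hc).ge ih
  · obtain ⟨hgE, hge⟩ := mem_sdiff.1 hg
    rw [mem_singleton.1 hc]
    exact (hiso g hgE (by simpa using hge)).symm
  · rw [mem_singleton.1 hc']
    exact not_disjoint_self_of_card_eq_two hc

theorem eq_or_eq_of_card_edgesMeeting_le_two {c g : Finset α}
    (hc : #(edgesMeeting E c) ≤ 2) (he : e ∈ E) (hf : f ∈ E) (hef : e ≠ f)
    (hec : ¬Disjoint e c) (hfc : ¬Disjoint f c) (hg : g ∈ E) (hgc : ¬Disjoint g c) :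
    g = e ∨ g = f := by
  have hsub : {e, f} ⊆ edgesMeeting E c := by
    simp [insert_subset_iff, edgesMeeting, he, hf, hec, hfc]
  have heq := eq_of_subset_of_card_le hsub (by rw [card_pair hef]; exact hc)
  have : g ∈ edgesMeeting E c := mem_filter.2 ⟨hg, hgc⟩
  simpa [← heq] using this

theorem HasLightTotalTransversal.of_card_edgesMeeting_le_two (hu : Uniform 2 E)
    (hiso : isolatedEdges E = ∅) (hlight : ∀ g ∈ E, #(edgesMeeting E g) ≤ 2) (he : e ∈ E)
    (ih : ∀ E' ⊂ E, HasLightTotalTransversal E') :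
    HasLightTotalTransversal E := by
  obtain ⟨f, hf, hfe, hef⟩ : ∃ f ∈ E, f ≠ e ∧ ¬Disjoint e f := by
    have : e ∉ isolatedEdges E := by simp [hiso]
    simpa [mem_isolatedEdges, he] using this
  have hee := not_disjoint_self_of_card_eq_two (hu e he)
  have hff := not_disjoint_self_of_card_eq_two (hu f hf)
  refine .of_separated (C := {e, f}) (by simp [insert_subset_iff, he, hf]) (by simp)
    (hu e he) (fun g hg c hc => ?_) (fun c hc => ?_)
    (weight_pair (hu e he) (hu f hf) hfe.symm hef).ge ih
  · obtain ⟨hgE, hgef⟩ := mem_sdiff.1 hg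
    simp only [mem_insert, mem_singleton, not_or] at hgef hc
    by_contra hgc
    rcases hc with rfl | rfl
    · exact (eq_or_eq_of_card_edgesMeeting_le_two (hlight c he) he hf hfe.symm hee
        (fun h => hef h.symm) hgE hgc).elim hgef.1 hgef.2
    · exact (eq_or_eq_of_card_edgesMeeting_le_two (hlight c hf) he hf hfe.symm hef hff
        hgE hgc).elim hgef.1 hgef.2
  · rcases mem_insert.1 hc with rfl | hc
    · exact hee
    · rw [mem_singleton.1 hc]
      exact fun h => hef h.symm

theorem weight_sdiff_isolatedEdges_add_le {E₁ : Finset (Finset α)} (hu : Uniform 2 E) (he : e ∈ E)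
    (hE₁ : E₁ ⊆ E) (hdisj : ∀ g ∈ E₁, Disjoint g e) (h3 : #E₁ + 3 ≤ #E) :
    weight (E₁ \ isolatedEdges E₁) + 5 * (2 + #(isolatedEdges E₁)) ≤ weight E := by
  set I := isolatedEdges E₁
  have hI : I ⊆ E₁ := filter_subset _ _
  have hcard : #(E₁ \ I) + #I = #E₁ := card_sdiff_add_card_eq_card hI
  have heI : Disjoint e (support I) :=
    (disjoint_biUnion_right _ _ _).2 fun g hg => (hdisj g (hI hg)).symm
  have hA : #(e ∪ support I) = 2 + 2 * #I := by
    rw [card_union_of_disjoint heI, hu e he, card_support_isolatedEdges (hu.mono hE₁)]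
  have hrest : Disjoint (support (E₁ \ I)) (e ∪ support I) := by
    refine (disjoint_biUnion_left _ _ _).2 fun g hg => ?_
    obtain ⟨hgE₁, hgI⟩ := mem_sdiff.1 hg
    refine disjoint_union_right.2 ⟨hdisj g hgE₁, (disjoint_biUnion_right _ _ _).2 fun f hf => ?_⟩
    exact ((mem_isolatedEdges.1 hf).2 g hgE₁ fun h => hgI (h ▸ hf)).symm
  have hsupp := card_support_add_card_le (sdiff_subset.trans hE₁)
    (union_subset (subset_support he) (support_mono (hI.trans hE₁))) hrest
  have hiso : isolatedEdges (E₁ \ I) = ∅ := isolatedEdges_sdiff_isolatedEdges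
  simp only [weight, hiso, card_empty] at hsupp ⊢
  omega

theorem exists_hAdj_of_mem_isolatedEdges_filter {g : Finset α}
    (hg : g ∈ isolatedEdges (E.filter (Disjoint · e))) (hg' : g ∉ isolatedEdges E) :
    ∃ x ∈ g, ∃ y ∈ e, HAdj E x y := by
  obtain ⟨hgE₁, hiso⟩ := mem_isolatedEdges.1 hg
  obtain ⟨hgE, hge⟩ := mem_filter.1 hgE₁
  obtain ⟨f, hf, hfg, hgf⟩ : ∃ f ∈ E, f ≠ g ∧ ¬Disjoint g f := by
    simpa [mem_isolatedEdges, hgE] using hg'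
  have hfe : ¬Disjoint f e := fun h => hgf (hiso f (mem_filter.2 ⟨hf, h⟩) hfg)
  obtain ⟨x, hxg, hxf⟩ := not_disjoint_iff.1 hgf
  obtain ⟨y, hyf, hye⟩ := not_disjoint_iff.1 hfe
  exact ⟨x, hxg, y, hye, fun h => disjoint_left.1 hge hxg (h ▸ hye), f, hf, hxf, hyf⟩

theorem HasLightTotalTransversal.of_three_le_card_edgesMeeting (hu : Uniform 2 E)
    (hiso : isolatedEdges E = ∅) (he : e ∈ E) (h3 : 3 ≤ #(edgesMeeting E e))
    (ih : ∀ E' ⊂ E, HasLightTotalTransversal E') :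
    HasLightTotalTransversal E := by
  set E₁ := E.filter (Disjoint · e)
  set I := isolatedEdges E₁
  have hE₁ : E₁ ⊆ E := filter_subset _ _
  have hlink : ∀ g ∈ I, ∃ x ∈ g, ∃ y ∈ e, HAdj E x y := fun g hg =>
    exists_hAdj_of_mem_isolatedEdges_filter hg (by simp [hiso])
  have : Nonempty α := ⟨(card_pos.1 (by rw [hu e he]; norm_num)).choose⟩
  choose! pick hpick hadj using hlink
  have heE₁ : e ∉ E₁ := fun h => not_disjoint_self_of_card_eq_two (hu e he) (mem_filter.1 h).2
  refine .of_subset (E' := E₁ \ I) (S := e ∪ I.image pick) (sdiff_subset.trans hE₁)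
    (ih _ (sdiff_subset.trans_ssubset ((ssubset_iff_of_subset hE₁).2 ⟨e, he, heE₁⟩)))
    (fun g hg hg' => ?_) (fun v hv => ?_) ?_
  · by_cases hge : Disjoint g e
    · have hgI : g ∈ I := by simpa [E₁, hg, hge] using hg'
      exact ⟨pick g, mem_union_right _ (mem_image_of_mem pick hgI), hpick g hgI⟩
    · obtain ⟨v, hvg, hve⟩ := not_disjoint_iff.1 hge
      exact ⟨v, mem_union_left _ hve, hvg⟩
  · rcases mem_union.1 hv with hv | hv
    · obtain ⟨u, hu', huv⟩ := exists_hAdj_of_card_eq_two he (hu e he) hv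
      exact ⟨u, mem_union_left _ hu', huv⟩
    · obtain ⟨g, hg, rfl⟩ := mem_image.1 hv
      obtain ⟨y, hy, hgy⟩ := hadj g hg
      exact ⟨y, mem_union_left _ hy, hgy⟩
  · have hS : #(e ∪ I.image pick) ≤ 2 + #I :=
      (card_union_le _ _).trans (by rw [hu e he]; exact Nat.add_le_add_left card_image_le 2)
    have hsplit : #E₁ + #(edgesMeeting E e) = #E := card_filter_add_card_filter_not _
    have hw : weight (E₁ \ I) + 5 * (2 + #I) ≤ weight E :=
      weight_sdiff_isolatedEdges_add_le hu he hE₁ (fun g hg => (mem_filter.1 hg).2)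
      (by omega)
    omega

theorem hasLightTotalTransversal (hu : Uniform 2 E) :
    HasLightTotalTransversal E := by
  induction E using Finset.strongInduction with
  | H E ih =>
    replace ih : ∀ E' ⊂ E, HasLightTotalTransversal E' :=
      fun E' h => ih E' h (hu.mono h.subset)
    by_cases hiso : (isolatedEdges E).Nonempty
    · obtain ⟨e, he⟩ := hiso
      exact .of_mem_isolatedEdges hu he ih
    rw [not_nonempty_iff_eq_empty] at hiso
    by_cases hheavy : ∃ e ∈ E, 3 ≤ #(edgesMeeting E e)
    · obtain ⟨e, he, h3⟩ := hheavy
      exact .of_three_le_card_edgesMeeting hu hiso he h3 ih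
    push Not at hheavy
    obtain rfl | ⟨e, he⟩ := E.eq_empty_or_nonempty
    · exact ⟨∅, ⟨by simp, by simp⟩, by simp⟩
    exact .of_card_edgesMeeting_le_two hu hiso (fun g hg => Nat.le_of_lt_succ (hheavy g hg)) he ih

end Hypergraph

theorem stmt6_general (E : Finset (Finset V)) (hu : Uniform 2 E) (he : NoIsolatedEdge E) :
    (taut E : ℝ) ≤ 2 * (Fintype.card V + E.card) / 5 := by
  obtain ⟨T, hT, hTw⟩ := Hypergraph.hasLightTotalTransversal hu
  have htaut : taut E ≤ #T := Nat.sInf_le ⟨T, hT.1, hT.2, rfl⟩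
  have hsupp : #(Hypergraph.support E) ≤ Fintype.card V := card_le_univ _
  have hbound : taut E * 5 ≤ 2 * (Fintype.card V + #E) := by
    simp only [Hypergraph.weight, Hypergraph.isolatedEdges_eq_empty he, card_empty] at hTw
    omega
  rw [le_div_iff₀ (by norm_num)]
  exact_mod_cast hbound

/-- If `H` is a 2-uniform hypergraph with no isolated vertices, no isolated
edges and no multiple edges, then `τ_t(H) ≤ 2(n(H) + m(H))/5`. -/
theorem stmt6 (E : Finset (Finset V)) (hu : Uniform 2 E)
    (hv : ∀ v : V, ∃ e ∈ E, v ∈ e) (he : NoIsolatedEdge E) :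
    (taut E : ℝ) ≤ 2 * (Fintype.card V + E.card) / 5 :=
  stmt6_general E hu he
end

section
/- For k ≥ 4, if H is a k-uniform hypergraph with no isolated vertices, no isolated edges and no multiple edges, then 6·τ_t(H) ≤ 2·n(H) + 2·m(H) − n₁(H). -/
/-! Put `W(H) = ∑ᵥ min (deg v) 2`. With no isolated vertices `W(H) + n₁(H) = 2 n(H)`, so
it suffices to find a total transversal `T` with `6 |T| ≤ 2 m(H) + W(H)`; this is proved by
induction on the number of edges, for edges of size at least 4.

If every degree is at most 2, then `W(H) = ∑ₑ |e| ≥ 4 m(H)`, and some total transversal has at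
most `m(H)` vertices. Otherwise pick `v` of degree at least 3 and a neighbour `w`, delete the edges
meeting `{v, w}` and then the edges this leaves isolated ("stranded"). A total transversal of the
rest extends to `H` by `v`, `w` and one vertex per stranded edge, chosen in an edge through `v` or
`w`. The deleted edges and the drop of `W` pay for the new vertices: if `w` lies in two edges
avoiding `v`, at least five edges are deleted; otherwise every neighbour of `v` loses weight, and
`v` has at least four neighbours. -/

open Finset

attribute [local instance] Classical.propDecidable

variable {V : Type*} [Fintype V] [DecidableEq V]

section

variable {α : Type*} {E E' : Finset (Finset α)} {S T : Finset α} {v w x y : α}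

def IsTransversal (E : Finset (Finset α)) (T : Finset α) : Prop :=
  ∀ e ∈ E, ∃ x ∈ T, x ∈ e

def IsTotalSet (E : Finset (Finset α)) (T : Finset α) : Prop :=
  ∀ x ∈ T, ∃ y ∈ T, HAdj E x y

theorem taut_le_card (hT : IsTransversal E T) (hT' : IsTotalSet E T) : taut E ≤ T.card :=
  Nat.sInf_le ⟨T, hT, hT', rfl⟩

theorem HAdj.symm (h : HAdj E x y) : HAdj E y x :=
  let ⟨hxy, e, he, hx, hy⟩ := h
  ⟨hxy.symm, e, he, hy, hx⟩

theorem HAdj.mono_s10 (hE : E' ⊆ E) (h : HAdj E' x y) : HAdj E x y :=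
  let ⟨hxy, e, he, hx, hy⟩ := h
  ⟨hxy, e, hE he, hx, hy⟩

theorem IsTotalSet.mono_s10 (hE : E' ⊆ E) (h : IsTotalSet E' T) : IsTotalSet E T := fun x hx =>
  let ⟨y, hy, hxy⟩ := h x hx
  ⟨y, hy, hxy.mono_s10 hE⟩

theorem isTotalSet_pair [DecidableEq α] (h : HAdj E v w) : IsTotalSet E {v, w} := by
  intro x hx
  rcases mem_insert.mp hx with rfl | hx
  · exact ⟨w, by simp, h⟩
  · exact ⟨v, by simp, mem_singleton.mp hx ▸ h.symm⟩

theorem lt_card_union_of_ne [DecidableEq α] {k : ℕ} {e f : Finset α} (he : k ≤ e.card)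
    (hf : k ≤ f.card) (hef : e ≠ f) : k < (e ∪ f).card := by
  by_contra! h
  have he' : e = e ∪ f := eq_of_subset_of_card_le subset_union_left (by omega)
  have hf' : f = e ∪ f := eq_of_subset_of_card_le subset_union_right (by omega)
  exact hef (he'.trans hf'.symm)

variable [DecidableEq α]

theorem hdeg_mono (h : E' ⊆ E) (x : α) : hdeg E' x ≤ hdeg E x :=
  card_le_card (filter_subset_filter _ h)

theorem hdeg_filter_lt {p : Finset α → Prop} [DecidablePred p] {e : Finset α} (he : e ∈ E)
    (hx : x ∈ e) (hpe : ¬p e) : hdeg (E.filter p) x < hdeg E x := by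
  refine card_lt_card ⟨fun g hg => ?_, fun h => hpe ?_⟩
  · exact mem_filter.mpr ⟨(mem_filter.mp (mem_filter.mp hg).1).1, (mem_filter.mp hg).2⟩
  · exact (mem_filter.mp (mem_filter.mp (h (mem_filter.mpr ⟨he, hx⟩))).1).2

theorem one_le_hdeg {e : Finset α} (he : e ∈ E) (hx : x ∈ e) : 1 ≤ hdeg E x :=
  card_pos.mpr ⟨e, mem_filter.mpr ⟨he, hx⟩⟩

theorem hdeg_eq_zero (h : ∀ e ∈ E, x ∉ e) : hdeg E x = 0 :=
  card_eq_zero.mpr (filter_eq_empty_iff.mpr h)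

def isolatedEdges (E : Finset (Finset α)) : Finset (Finset α) :=
  E.filter fun e => ∀ f ∈ E, f ≠ e → Disjoint e f

theorem noIsolatedEdge_sdiff_isolatedEdges (E : Finset (Finset α)) :
    NoIsolatedEdge (E \ isolatedEdges E) := by
  intro e he
  obtain ⟨heE, heI⟩ := mem_sdiff.mp he
  obtain ⟨f, hfE, hfe, hef⟩ : ∃ f ∈ E, f ≠ e ∧ ¬Disjoint e f := by
    simpa [isolatedEdges, heE] using heI
  have hfI : f ∉ isolatedEdges E := fun hf =>
    hef ((mem_filter.mp hf).2 e heE hfe.symm).symm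
  obtain ⟨x, hxe, hxf⟩ := not_disjoint_iff.mp hef
  exact ⟨f, mem_sdiff.mpr ⟨hfE, hfI⟩, hfe, x, hxe, hxf⟩

theorem pairwiseDisjoint_isolatedEdges (E : Finset (Finset α)) :
    (isolatedEdges E : Set (Finset α)).PairwiseDisjoint id := fun _ he f hf hef =>
  (mem_filter.mp (mem_coe.mp he)).2 f (mem_filter.mp (mem_coe.mp hf)).1 hef.symm

theorem hdeg_sdiff_isolatedEdges_eq_zero {e : Finset α} (he : e ∈ isolatedEdges E)
    (hx : x ∈ e) : hdeg (E \ isolatedEdges E) x = 0 := by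
  refine hdeg_eq_zero fun f hf hxf => ?_
  obtain ⟨hfE, hfI⟩ := mem_sdiff.mp hf
  have hfe : f ≠ e := fun h => hfI (h ▸ he)
  exact disjoint_left.mp ((mem_filter.mp he).2 f hfE hfe) hx hxf

def edgesAvoiding (E : Finset (Finset α)) (S : Finset α) : Finset (Finset α) :=
  E.filter fun e => Disjoint e S

def strandedEdges (E : Finset (Finset α)) (S : Finset α) : Finset (Finset α) :=
  isolatedEdges (edgesAvoiding E S)

def residualEdges (E : Finset (Finset α)) (S : Finset α) : Finset (Finset α) :=
  edgesAvoiding E S \ strandedEdges E S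

theorem residualEdges_subset_edgesAvoiding : residualEdges E S ⊆ edgesAvoiding E S :=
  sdiff_subset

theorem residualEdges_subset : residualEdges E S ⊆ E :=
  residualEdges_subset_edgesAvoiding.trans (filter_subset _ _)

theorem strandedEdges_subset_edgesAvoiding : strandedEdges E S ⊆ edgesAvoiding E S :=
  filter_subset _ _

theorem edgesAvoiding_subset_filter_notMem (hv : v ∈ S) :
    edgesAvoiding E S ⊆ E.filter (v ∉ ·) := fun _ he =>
  mem_filter.mpr ⟨(mem_filter.mp he).1, fun hve => disjoint_left.mp (mem_filter.mp he).2 hve hv⟩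

theorem residualEdges_ssubset {e : Finset α} (he : e ∈ E) (heS : ¬Disjoint e S) :
    residualEdges E S ⊂ E :=
  residualEdges_subset_edgesAvoiding.trans_ssubset (filter_ssubset.mpr ⟨e, he, heS⟩)

theorem residualEdges_pair_ssubset (h : HAdj E v w) : residualEdges E {v, w} ⊂ E :=
  let ⟨_, _, he, hve, _⟩ := h
  residualEdges_ssubset he (not_disjoint_iff.mpr ⟨v, hve, mem_insert_self v {w}⟩)

theorem noIsolatedEdge_residualEdges : NoIsolatedEdge (residualEdges E S) :=
  noIsolatedEdge_sdiff_isolatedEdges _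

theorem card_residualEdges_add_card_strandedEdges_add :
    (residualEdges E S).card + (strandedEdges E S).card
      + (E.filter fun e => ¬Disjoint e S).card = E.card := by
  rw [residualEdges, card_sdiff_add_card_eq_card strandedEdges_subset_edgesAvoiding, edgesAvoiding,
    card_filter_add_card_filter_not]

theorem hdeg_residualEdges_eq_zero_of_mem (hx : x ∈ S) : hdeg (residualEdges E S) x = 0 :=
  hdeg_eq_zero fun _ he hxe =>
    disjoint_left.mp (mem_filter.mp (residualEdges_subset_edgesAvoiding he)).2 hxe hx

theorem hdeg_residualEdges_eq_zero_of_mem_biUnion (hx : x ∈ (strandedEdges E S).biUnion id) :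
    hdeg (residualEdges E S) x = 0 :=
  let ⟨_, he, hxe⟩ := mem_biUnion.mp hx
  hdeg_sdiff_isolatedEdges_eq_zero he hxe

theorem notMem_of_mem_biUnion_strandedEdges (hx : x ∈ (strandedEdges E S).biUnion id) :
    x ∉ S :=
  let ⟨_, he, hxe⟩ := mem_biUnion.mp hx
  disjoint_left.mp (mem_filter.mp (strandedEdges_subset_edgesAvoiding he)).2 hxe

theorem one_le_hdeg_filter_of_mem_biUnion (hv : v ∈ S)
    (hx : x ∈ (strandedEdges E S).biUnion id) : 1 ≤ hdeg (E.filter (v ∉ ·)) x :=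
  let ⟨_, he, hxe⟩ := mem_biUnion.mp hx
  one_le_hdeg (edgesAvoiding_subset_filter_notMem hv (strandedEdges_subset_edgesAvoiding he)) hxe

theorem mul_card_strandedEdges_le {k : ℕ} (hk : ∀ e ∈ E, k ≤ e.card) :
    k * (strandedEdges E S).card ≤ ((strandedEdges E S).biUnion id).card := by
  rw [strandedEdges, card_biUnion (pairwiseDisjoint_isolatedEdges _), mul_comm, ← smul_eq_mul]
  exact card_nsmul_le_sum _ _ _ fun e he =>
    hk e (mem_filter.mp (strandedEdges_subset_edgesAvoiding he)).1

theorem exists_hadj_of_mem_strandedEdges (hE : NoIsolatedEdge E) {e : Finset α}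
    (he : e ∈ strandedEdges E S) : ∃ x ∈ e, ∃ s ∈ S, HAdj E x s := by
  obtain ⟨heE, heS⟩ := mem_filter.mp (strandedEdges_subset_edgesAvoiding he)
  obtain ⟨f, hfE, hfe, x, hxe, hxf⟩ := hE e heE
  -- `f` meets `e`, so it cannot avoid `S`, or `e` would not be isolated there
  have hfS : ¬Disjoint f S := fun hfS =>
    disjoint_left.mp ((mem_filter.mp he).2 f (mem_filter.mpr ⟨hfE, hfS⟩) hfe) hxe hxf
  obtain ⟨s, hsf, hsS⟩ := not_disjoint_iff.mp hfS
  have hxs : x ≠ s := fun h => disjoint_left.mp heS hxe (h ▸ hsS)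
  exact ⟨x, hxe, s, hsS, hxs, f, hfE, hxf, hsf⟩

theorem exists_totalTransversal_of_residualEdges (hE : NoIsolatedEdge E) (hS : IsTotalSet E S)
    (hT : IsTransversal (residualEdges E S) T) (hT' : IsTotalSet (residualEdges E S) T) :
    ∃ T₀, IsTransversal E T₀ ∧ IsTotalSet E T₀ ∧
      T₀.card ≤ T.card + S.card + (strandedEdges E S).card := by
  have hattach : ∀ e ∈ strandedEdges E S, ∃ x ∈ e, ∃ s ∈ S, HAdj E x s := fun _ he =>
    exists_hadj_of_mem_strandedEdges hE he
  choose u hu s hsS hus using hattach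
  set U := (strandedEdges E S).attach.image fun e => u e.1 e.2
  refine ⟨T ∪ S ∪ U, fun e he => ?_, fun x hx => ?_, ?_⟩
  · by_cases heS : Disjoint e S
    · by_cases hI : e ∈ strandedEdges E S
      · exact ⟨u e hI, mem_union_right _ (mem_image_of_mem _ (mem_attach _ ⟨e, hI⟩)), hu e hI⟩
      · obtain ⟨x, hxT, hxe⟩ := hT e (mem_sdiff.mpr ⟨mem_filter.mpr ⟨he, heS⟩, hI⟩)
        exact ⟨x, mem_union_left _ (mem_union_left _ hxT), hxe⟩
    · obtain ⟨x, hxe, hxS⟩ := not_disjoint_iff.mp heS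
      exact ⟨x, mem_union_left _ (mem_union_right _ hxS), hxe⟩
  · rcases mem_union.mp hx with hx | hx
    · rcases mem_union.mp hx with hx | hx
      · obtain ⟨y, hyT, hxy⟩ := hT' x hx
        exact ⟨y, mem_union_left _ (mem_union_left _ hyT), hxy.mono_s10 residualEdges_subset⟩
      · obtain ⟨y, hyS, hxy⟩ := hS x hx
        exact ⟨y, mem_union_left _ (mem_union_right _ hyS), hxy⟩
    · obtain ⟨⟨e, he⟩, -, rfl⟩ := mem_image.mp hx
      exact ⟨s e he, mem_union_left _ (mem_union_right _ (hsS e he)), hus e he⟩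
  · calc (T ∪ S ∪ U).card ≤ (T ∪ S).card + U.card := card_union_le _ _
      _ ≤ T.card + S.card + (strandedEdges E S).card :=
        add_le_add (card_union_le _ _) (card_image_le.trans_eq card_attach)

theorem exists_adjacent_pair_meeting_two_edges (hE : NoIsolatedEdge E)
    (h2 : ∀ e ∈ E, 2 ≤ e.card) {e : Finset α} (he : e ∈ E) :
    ∃ x y, HAdj E x y ∧ 2 ≤ (E.filter fun g => ¬Disjoint g {x, y}).card := by
  obtain ⟨f, hfE, hfe, x, hxe, hxf⟩ := hE e he
  obtain ⟨y, hyf, hyx⟩ := exists_mem_ne (h2 f hfE) x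
  refine ⟨x, y, ⟨hyx.symm, f, hfE, hxf, hyf⟩, one_lt_card.mpr ⟨e, ?_, f, ?_, hfe.symm⟩⟩
  · exact mem_filter.mpr ⟨he, not_disjoint_iff.mpr ⟨x, hxe, mem_insert_self x _⟩⟩
  · exact mem_filter.mpr ⟨hfE, not_disjoint_iff.mpr ⟨x, hxf, mem_insert_self x _⟩⟩

theorem exists_totalTransversal_card_le_card (hE : NoIsolatedEdge E) (h2 : ∀ e ∈ E, 2 ≤ e.card) :
    ∃ T, IsTransversal E T ∧ IsTotalSet E T ∧ T.card ≤ E.card := by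
  induction E using Finset.strongInduction with
  | H E ih =>
  obtain rfl | ⟨e, he⟩ := E.eq_empty_or_nonempty
  · exact ⟨∅, by simp [IsTransversal], by simp [IsTotalSet], by simp⟩
  obtain ⟨x, y, hxy, hG⟩ := exists_adjacent_pair_meeting_two_edges hE h2 he
  have hsub := residualEdges_pair_ssubset hxy
  obtain ⟨T, hT, hT', hTcard⟩ :=
    ih _ hsub noIsolatedEdge_residualEdges fun e he => h2 e (hsub.subset he)
  obtain ⟨T₀, hT₀, hT₀', hT₀card⟩ :=
    exists_totalTransversal_of_residualEdges hE (isTotalSet_pair hxy) hT hT'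
  have := card_residualEdges_add_card_strandedEdges_add (E := E) (S := {x, y})
  have := card_le_two (a := x) (b := y)
  exact ⟨T₀, hT₀, hT₀', by omega⟩

theorem hdeg_add_hdeg_filter_le :
    hdeg E v + hdeg (E.filter (v ∉ ·)) w ≤ (E.filter fun g => ¬Disjoint g {v, w}).card := by
  rw [hdeg, hdeg, ← card_union_of_disjoint]
  · refine card_le_card fun g hg => ?_
    simp only [mem_union, mem_filter] at hg ⊢
    rcases hg with ⟨hg, hvg⟩ | ⟨⟨hg, -⟩, hwg⟩
    · exact ⟨hg, not_disjoint_iff.mpr ⟨v, hvg, by simp⟩⟩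
    · exact ⟨hg, not_disjoint_iff.mpr ⟨w, hwg, by simp⟩⟩
  · exact disjoint_filter_filter_not E E (v ∈ ·) |>.mono_right (filter_subset _ _)

variable [Fintype α]

def cappedDegSum (E : Finset (Finset α)) : ℕ := ∑ x, min (hdeg E x) 2

theorem cappedDegSum_add_n1 (hcover : ∀ x, ∃ e ∈ E, x ∈ e) :
    cappedDegSum E + n1 E = 2 * Fintype.card α := by
  rw [cappedDegSum, n1, card_filter, ← sum_add_distrib, ← card_univ, mul_comm, ← smul_eq_mul,
    ← sum_const]
  refine sum_congr rfl fun x _ => ?_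
  obtain ⟨e, he, hx⟩ := hcover x
  have := one_le_hdeg he hx
  split_ifs <;> omega

theorem sum_hdeg (E : Finset (Finset α)) : ∑ x, hdeg E x = ∑ e ∈ E, e.card := by
  simp only [hdeg, card_filter]
  rw [sum_comm]
  simp

theorem cappedDegSum_eq_sum_card (h : ∀ x, hdeg E x ≤ 2) : cappedDegSum E = ∑ e ∈ E, e.card := by
  rw [cappedDegSum, sum_congr rfl fun x _ => min_eq_left (h x), sum_hdeg]

theorem sum_add_cappedDegSum_le (b : α → ℕ)
    (h : ∀ x, b x + min (hdeg E' x) 2 ≤ min (hdeg E x) 2) :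
    ∑ x, b x + cappedDegSum E' ≤ cappedDegSum E := by
  rw [cappedDegSum, cappedDegSum, ← sum_add_distrib]
  exact sum_le_sum fun x _ => h x

theorem le_card_filter_hadj {k : ℕ} (hk : ∀ e ∈ E, k ≤ e.card) (hv : 2 ≤ hdeg E v) :
    k ≤ (univ.filter (HAdj E v)).card := by
  obtain ⟨e, he, f, hf, hef⟩ := one_lt_card.mp hv
  obtain ⟨heE, hve⟩ := mem_filter.mp he
  obtain ⟨hfE, hvf⟩ := mem_filter.mp hf
  have hsub : (e ∪ f).erase v ⊆ univ.filter (HAdj E v) := by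
    intro x hx
    obtain ⟨hxv, hx⟩ := mem_erase.mp hx
    refine mem_filter.mpr ⟨mem_univ x, hxv.symm, ?_⟩
    rcases mem_union.mp hx with hx | hx
    · exact ⟨e, heE, hve, hx⟩
    · exact ⟨f, hfE, hvf, hx⟩
  have hunion := lt_card_union_of_ne (hk e heE) (hk f hfE) hef
  have := card_le_card hsub
  rw [card_erase_of_mem (mem_union_left _ hve)] at this
  omega

def HasTotalTransversalBound (E : Finset (Finset α)) : Prop :=
  ∃ T, IsTransversal E T ∧ IsTotalSet E T ∧ 6 * T.card ≤ 2 * E.card + cappedDegSum E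

/-- The extension of `exists_totalTransversal_of_residualEdges` adds at most
`2 + |strandedEdges E S|` vertices, i.e. `12 + 6 |strandedEdges E S|` to `6 |T|`; this is what the
deleted edges and the drop of `cappedDegSum` have to cover. -/
def PaysOff (E : Finset (Finset α)) (S : Finset α) : Prop :=
  cappedDegSum (residualEdges E S) + 12 + 4 * (strandedEdges E S).card
    ≤ cappedDegSum E + 2 * (E.filter fun g => ¬Disjoint g S).card

theorem HasTotalTransversalBound.of_residualEdges (hE : NoIsolatedEdge E) (hS : IsTotalSet E S)
    (hS2 : S.card ≤ 2) (hpay : PaysOff E S) (h : HasTotalTransversalBound (residualEdges E S)) :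
    HasTotalTransversalBound E := by
  obtain ⟨T, hT, hT', hTcard⟩ := h
  obtain ⟨T₀, hT₀, hT₀', hT₀card⟩ := exists_totalTransversal_of_residualEdges hE hS hT hT'
  have := card_residualEdges_add_card_strandedEdges_add (E := E) (S := S)
  exact ⟨T₀, hT₀, hT₀', by unfold PaysOff at hpay; omega⟩

theorem hasTotalTransversalBound_of_hdeg_le_two (hE : NoIsolatedEdge E)
    (h4 : ∀ e ∈ E, 4 ≤ e.card) (hmax : ∀ x, hdeg E x ≤ 2) : HasTotalTransversalBound E := by
  obtain ⟨T, hT, hT', hTcard⟩ :=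
    exists_totalTransversal_card_le_card hE fun e he => (by norm_num : 2 ≤ 4).trans (h4 e he)
  have := card_nsmul_le_sum _ _ _ h4
  rw [← cappedDegSum_eq_sum_card hmax, smul_eq_mul] at this
  exact ⟨T, hT, hT', by omega⟩

theorem paysOff_of_forall_le (h4 : ∀ e ∈ E, 4 ≤ e.card) (P Q : Finset α)
    (hdrop : ∀ x, (if x ∈ P then 2 else 0) + (if x ∈ Q then 1 else 0)
      + (if x ∈ (strandedEdges E S).biUnion id then 1 else 0)
      + min (hdeg (residualEdges E S) x) 2 ≤ min (hdeg E x) 2)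
    (hcount : 12 ≤ 2 * P.card + Q.card + 2 * (E.filter fun g => ¬Disjoint g S).card) :
    PaysOff E S := by
  have hU := mul_card_strandedEdges_le (S := S) h4
  have h := sum_add_cappedDegSum_le _ hdrop
  simp only [sum_add_distrib, sum_ite_mem, univ_inter, sum_const, smul_eq_mul] at h
  unfold PaysOff
  omega

theorem paysOff_of_heavy (h4 : ∀ e ∈ E, 4 ≤ e.card) (hv : 3 ≤ hdeg E v) (hvw : v ≠ w)
    (hw : 2 ≤ hdeg (E.filter (v ∉ ·)) w) : PaysOff E {v, w} := by
  have hG := hdeg_add_hdeg_filter_le (E := E) (v := v) (w := w)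
  refine paysOff_of_forall_le h4 {v, w} ∅ (fun x => ?_) (by rw [card_pair hvw]; omega)
  have hle := hdeg_mono (residualEdges_subset (E := E) (S := {v, w})) x
  have hfilter := hdeg_mono (filter_subset (v ∉ ·) E) x
  by_cases hxU : x ∈ (strandedEdges E {v, w}).biUnion id
  · have hx0 := hdeg_residualEdges_eq_zero_of_mem_biUnion hxU
    have hx1 := one_le_hdeg_filter_of_mem_biUnion (mem_insert_self v {w}) hxU
    simp only [notMem_of_mem_biUnion_strandedEdges hxU, hxU, notMem_empty, if_true, if_false]
    omega
  · by_cases hxS : x ∈ ({v, w} : Finset α)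
    · have hx0 := hdeg_residualEdges_eq_zero_of_mem (E := E) hxS
      have hx2 : 2 ≤ hdeg E x := by
        rcases mem_insert.mp hxS with rfl | hxw
        · omega
        · rw [mem_singleton.mp hxw]
          exact hw.trans (hdeg_mono (filter_subset _ _) w)
      simp only [hxS, hxU, notMem_empty, if_true, if_false]
      omega
    · simp only [hxS, hxU, notMem_empty, if_false]
      omega

theorem paysOff_of_light (h4 : ∀ e ∈ E, 4 ≤ e.card) (hv : 3 ≤ hdeg E v)
    (hlight : ∀ x, HAdj E v x → hdeg (E.filter (v ∉ ·)) x ≤ 1) (hw : HAdj E v w) :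
    PaysOff E {v, w} := by
  have hG := hdeg_add_hdeg_filter_le (E := E) (v := v) (w := w)
  have hnbrs := le_card_filter_hadj h4 (v := v) (by omega)
  refine paysOff_of_forall_le h4 {v} (univ.filter (HAdj E v)) (fun x => ?_)
    (by rw [card_singleton]; omega)
  have hvS : v ∈ ({v, w} : Finset α) := mem_insert_self v {w}
  have hle := hdeg_mono ((residualEdges_subset_edgesAvoiding (E := E)).trans
    (edgesAvoiding_subset_filter_notMem hvS)) x
  have hfilter := hdeg_mono (filter_subset (v ∉ ·) E) x
  by_cases hxv : x = v
  · subst hxv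
    have hxA : x ∉ univ.filter (HAdj E x) := fun h => (mem_filter.mp h).2.1 rfl
    have hxU : x ∉ (strandedEdges E {x, w}).biUnion id := fun h =>
      notMem_of_mem_biUnion_strandedEdges h hvS
    have := hdeg_residualEdges_eq_zero_of_mem (E := E) hvS
    simp only [mem_singleton, hxA, hxU, if_true, if_false]
    omega
  have hU : x ∈ (strandedEdges E {v, w}).biUnion id →
      hdeg (residualEdges E {v, w}) x = 0 ∧ 1 ≤ hdeg (E.filter (v ∉ ·)) x := fun h =>
    ⟨hdeg_residualEdges_eq_zero_of_mem_biUnion h, one_le_hdeg_filter_of_mem_biUnion hvS h⟩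
  have hA : x ∈ univ.filter (HAdj E v) →
      hdeg (E.filter (v ∉ ·)) x < hdeg E x ∧ hdeg (E.filter (v ∉ ·)) x ≤ 1 := fun h => by
    obtain ⟨-, -, f, hf, hvf, hxf⟩ := mem_filter.mp h
    exact ⟨hdeg_filter_lt hf hxf (not_not.mpr hvf), hlight x (mem_filter.mp h).2⟩
  simp only [mem_singleton, hxv, if_false]
  split_ifs with hxA hxU hxU
  · have := hA hxA; have := hU hxU; omega
  · have := hA hxA; omega
  · have := hU hxU; omega
  · omega

theorem hasTotalTransversalBound (hE : NoIsolatedEdge E) (h4 : ∀ e ∈ E, 4 ≤ e.card) :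
    HasTotalTransversalBound E := by
  induction E using Finset.strongInduction with
  | H E ih =>
  by_cases hmax : ∀ x, hdeg E x ≤ 2
  · exact hasTotalTransversalBound_of_hdeg_le_two hE h4 hmax
  obtain ⟨v, hv⟩ := not_forall.mp hmax
  obtain ⟨w, hvw, hpay⟩ : ∃ w, HAdj E v w ∧ PaysOff E {v, w} := by
    by_cases hheavy : ∃ w, HAdj E v w ∧ 2 ≤ hdeg (E.filter (v ∉ ·)) w
    · obtain ⟨w, hvw, hw⟩ := hheavy
      exact ⟨w, hvw, paysOff_of_heavy h4 (by omega) hvw.1 hw⟩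
    · simp only [not_exists, not_and, not_le] at hheavy
      have := le_card_filter_hadj h4 (v := v) (by omega)
      obtain ⟨w, hw⟩ := card_pos.mp (by omega : 0 < (univ.filter (HAdj E v)).card)
      have hvw := (mem_filter.mp hw).2
      exact ⟨w, hvw, paysOff_of_light h4 (by omega)
        (fun x hx => Nat.le_of_lt_succ (hheavy x hx)) hvw⟩
  have hsub := residualEdges_pair_ssubset hvw
  exact (ih _ hsub noIsolatedEdge_residualEdges fun e he => h4 e (hsub.subset he)).of_residualEdges
    hE (isTotalSet_pair hvw) card_le_two hpay

end

/-- For `k ≥ 4`, if `H` is a `k`-uniform hypergraph with no isolated vertices,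
no isolated edges and no multiple edges, then
`6·τ_t(H) ≤ 2·n(H) + 2·m(H) − n₁(H)`. -/
theorem stmt10 (k : ℕ) (hk : 4 ≤ k) (E : Finset (Finset V)) (hu : Uniform k E)
    (hv : ∀ v : V, ∃ e ∈ E, v ∈ e) (he : NoIsolatedEdge E) :
    6 * taut E ≤ 2 * Fintype.card V + 2 * E.card - n1 E := by
  obtain ⟨T, hT, hT', hbound⟩ := hasTotalTransversalBound he fun e he => hu e he ▸ hk
  have := taut_le_card hT hT'
  have := cappedDegSum_add_n1 hv
  omega
end

section
/- For every constant c > 1 and every k-uniform hypergraph H (with k ≥ 2), the strong transversal number satisfies τ₂(H) ≤ ((ln k + ln c)/(k−1))·n(H) + ((ln k + ln c)/(c(k−1)))·m(H) + (2/(ck))·m(H). -/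
open Finset

attribute [local instance] Classical.propDecidable

variable {V : Type*} [Fintype V] [DecidableEq V]

/-!
Put every vertex independently into a random set `S` with probability
`p = min (ln (ck) / (k - 1)) 1` and repair `S` by adding, for every edge `e`, `2 - |e ∩ S|`
further vertices of `e` (truncated subtraction: only edges meeting `S` in at most one vertex cost
anything). The expected size of the repaired set is `p n + m (2 (1-p)^k + k p (1-p)^(k-1))`, and
some outcome is no larger than this expectation. Finally `(1-p)^(k-1) ≤ exp (-p (k-1)) = 1 / (ck)`.
-/

omit [Fintype V] in
theorem tau2_le_card (E : Finset (Finset V)) {T : Finset V} (hT : ∀ e ∈ E, 2 ≤ (e ∩ T).card) :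
    tau2 E ≤ T.card :=
  Nat.sInf_le ⟨T, hT, rfl⟩

omit [Fintype V] in
theorem tau2_le_card_add_sum_repair (E : Finset (Finset V)) (hE : ∀ e ∈ E, 2 ≤ e.card)
    (S : Finset V) : tau2 E ≤ S.card + ∑ e ∈ E, (2 - (e ∩ S).card) := by
  have hrepair : ∀ e ∈ E, ∃ t ⊆ e \ S, t.card = 2 - (e ∩ S).card := fun e he =>
    exists_subset_card_eq (by have := card_inter_add_card_sdiff e S; have := hE e he; omega)
  choose! t ht_sub ht_card using hrepair
  refine (tau2_le_card E (T := S ∪ E.biUnion t) fun e he => ?_).trans ?_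
  · have hdisj : Disjoint (e ∩ S) (t e) :=
      disjoint_left.2 fun x hx hxt => (mem_sdiff.1 (ht_sub e he hxt)).2 (mem_inter.1 hx).2
    have hsub : e ∩ S ∪ t e ⊆ e ∩ (S ∪ E.biUnion t) := by
      intro x hx
      rcases mem_union.1 hx with hx | hx
      · exact inter_subset_inter_left subset_union_left hx
      · exact mem_inter.2 ⟨(mem_sdiff.1 (ht_sub e he hx)).1,
          mem_union_right _ (mem_biUnion.2 ⟨e, he, hx⟩)⟩
    have := card_le_card hsub
    rw [card_union_of_disjoint hdisj, ht_card e he] at this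
    omega
  · calc (S ∪ E.biUnion t).card ≤ S.card + ∑ e ∈ E, (t e).card :=
          (card_union_le _ _).trans (Nat.add_le_add_left card_biUnion_le _)
      _ = S.card + ∑ e ∈ E, (2 - (e ∩ S).card) := by rw [sum_congr rfl ht_card]

/-- The probability that a random set, containing each vertex independently with probability `p`,
equals `S`. -/
noncomputable def bernoulliWeight (p : ℝ) (S : Finset V) : ℝ :=
  ∏ v, if v ∈ S then p else 1 - p

theorem sum_prod_ite_mem (f g : V → ℝ) :
    ∑ S : Finset V, ∏ v, (if v ∈ S then f v else g v) = ∏ v, (f v + g v) := by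
  rw [prod_add, powerset_univ]
  refine sum_congr rfl fun S _ => ?_
  rw [prod_ite, ← compl_eq_univ_sdiff]
  congr 2 <;> ext <;> simp

theorem sum_bernoulliWeight_mul_prod (p : ℝ) (f g : V → ℝ) :
    ∑ S, bernoulliWeight p S * ∏ v, (if v ∈ S then f v else g v) =
      ∏ v, (p * f v + (1 - p) * g v) := by
  simp_rw [bernoulliWeight, ← prod_mul_distrib, ← sum_prod_ite_mem, apply_ite₂ (· * ·)]

theorem sum_bernoulliWeight (p : ℝ) : ∑ S : Finset V, bernoulliWeight p S = 1 := by
  simpa using sum_bernoulliWeight_mul_prod (V := V) p 1 1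

theorem bernoulliWeight_nonneg {p : ℝ} (hp₀ : 0 ≤ p) (hp₁ : p ≤ 1) (S : Finset V) :
    0 ≤ bernoulliWeight p S :=
  prod_nonneg fun v _ => by split_ifs <;> linarith

theorem sum_bernoulliWeight_mul_indicator (p : ℝ) {A B : Finset V} (hAB : Disjoint A B) :
    ∑ S, bernoulliWeight p S * (if Disjoint A S ∧ B ⊆ S then 1 else 0) =
      (1 - p) ^ A.card * p ^ B.card := by
  have hind : ∀ S : Finset V, (if Disjoint A S ∧ B ⊆ S then (1 : ℝ) else 0) =
      ∏ v, if v ∈ S then (if v ∈ A then 0 else 1) else (if v ∈ B then 0 else 1) := by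
    intro S
    have : ∀ v, (if v ∈ S then (if v ∈ A then (0 : ℝ) else 1) else (if v ∈ B then 0 else 1)) =
        if (v ∈ S → v ∉ A) ∧ (v ∉ S → v ∉ B) then 1 else 0 := fun v => by
      split_ifs <;> tauto
    simp only [prod_congr rfl fun v _ => this v, prod_boole, disjoint_right, subset_iff,
      mem_univ, true_implies, not_imp_not, forall_and]
  have hfactor : ∀ v, p * (if v ∈ A then 0 else 1) + (1 - p) * (if v ∈ B then 0 else 1) =
      (if v ∈ A then 1 - p else 1) * (if v ∈ B then p else 1) := fun v => by
    by_cases hA : v ∈ A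
    · simp [hA, disjoint_left.1 hAB hA]
    · by_cases hB : v ∈ B <;> simp [hA, hB]
  simp_rw [hind, sum_bernoulliWeight_mul_prod, hfactor, prod_mul_distrib, prod_ite_mem, univ_inter,
    prod_const]

theorem natCast_two_sub_card_inter (e S : Finset V) :
    ((2 - (e ∩ S).card : ℕ) : ℝ) = 2 * (if Disjoint e S then 1 else 0) +
      ∑ u ∈ e, if Disjoint (e.erase u) S ∧ {u} ⊆ S then 1 else 0 := by
  have hsingle : ∀ u ∈ e, (Disjoint (e.erase u) S ∧ {u} ⊆ S ↔ e ∩ S = {u}) := fun u hu => by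
    rw [singleton_subset_iff, disjoint_iff_inter_eq_empty, erase_inter, erase_eq_empty_iff]
    constructor
    · rintro ⟨h | h, huS⟩
      · exact absurd (mem_inter.2 ⟨hu, huS⟩) (h ▸ notMem_empty u)
      · exact h
    · intro h; exact ⟨Or.inr h, (mem_inter.1 (h ▸ mem_singleton_self u)).2⟩
  have hone : ∑ u ∈ e, (if e ∩ S = {u} then 1 else 0 : ℝ) = if (e ∩ S).card = 1 then 1 else 0 := by
    by_cases h : ∃ a, e ∩ S = {a}
    · obtain ⟨a, ha⟩ := h
      have hae : a ∈ e := (mem_inter.1 (ha ▸ mem_singleton_self a)).1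
      simp [ha, hae]
    · rw [if_neg (card_eq_one.not.2 h)]
      exact sum_eq_zero fun u _ => if_neg fun hu => h ⟨u, hu⟩
  rw [sum_congr rfl fun u hu => if_congr (hsingle u hu) rfl rfl, hone]
  simp only [disjoint_iff_inter_eq_empty, ← card_eq_zero]
  rcases (e ∩ S).card with _ | _ | n <;> simp

theorem sum_bernoulliWeight_mul_card (p : ℝ) :
    ∑ S : Finset V, bernoulliWeight p S * S.card = p * Fintype.card V := by
  have hcard : ∀ S : Finset V,
      (S.card : ℝ) = ∑ u, if Disjoint ∅ S ∧ {u} ⊆ S then 1 else 0 := fun S => by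
    simp
  have hvertex : ∀ u : V, ∑ S, bernoulliWeight p S *
      (if Disjoint ∅ S ∧ {u} ⊆ S then 1 else 0) = p := fun u => by
    simpa using sum_bernoulliWeight_mul_indicator p (disjoint_empty_left {u})
  simp_rw [hcard, mul_sum]
  rw [sum_comm]
  simp only [hvertex, sum_const, card_univ, nsmul_eq_mul, mul_comm]

theorem sum_bernoulliWeight_mul_two_sub_card_inter (p : ℝ) (e : Finset V) :
    ∑ S, bernoulliWeight p S * ((2 - (e ∩ S).card : ℕ) : ℝ) =
      2 * (1 - p) ^ e.card + e.card * ((1 - p) ^ (e.card - 1) * p) := by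
  have hedge : ∑ S, bernoulliWeight p S * (if Disjoint e S then 1 else 0) = (1 - p) ^ e.card := by
    simpa using sum_bernoulliWeight_mul_indicator p (disjoint_empty_right e)
  have hvertex : ∀ u ∈ e, ∑ S, bernoulliWeight p S *
      (if Disjoint (e.erase u) S ∧ {u} ⊆ S then 1 else 0) = (1 - p) ^ (e.card - 1) * p := by
    intro u hu
    rw [sum_bernoulliWeight_mul_indicator p (disjoint_singleton_right.2 (notMem_erase u e)),
      card_erase_of_mem hu, card_singleton, pow_one]
  simp_rw [natCast_two_sub_card_inter, mul_add, sum_add_distrib, mul_left_comm _ (2 : ℝ),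
    ← mul_sum, hedge, mul_sum]
  rw [sum_comm, sum_congr rfl hvertex, sum_const, nsmul_eq_mul]

theorem exists_le_sum_mul {ι : Type*} [Fintype ι] [Nonempty ι] (w X : ι → ℝ)
    (hw : ∀ i, 0 ≤ w i) (hw_sum : ∑ i, w i = 1) : ∃ i, X i ≤ ∑ i, w i * X i := by
  obtain ⟨i, -, hi⟩ := exists_mem_eq_inf' univ_nonempty X
  refine ⟨i, hi ▸ ?_⟩
  have := inf_le_centerMass (s := univ) (f := X) (fun i _ => hw i) (by rw [hw_sum]; exact one_pos)
  simpa [centerMass_eq_of_sum_1 _ _ hw_sum] using this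

theorem tau2_le_expected_repair_cost (E : Finset (Finset V)) (hE : ∀ e ∈ E, 2 ≤ e.card) {p : ℝ}
    (hp₀ : 0 ≤ p) (hp₁ : p ≤ 1) :
    (tau2 E : ℝ) ≤ p * Fintype.card V +
      ∑ e ∈ E, (2 * (1 - p) ^ e.card + e.card * ((1 - p) ^ (e.card - 1) * p)) := by
  obtain ⟨S, hS⟩ := exists_le_sum_mul (bernoulliWeight p)
    (fun S => (S.card : ℝ) + ∑ e ∈ E, ((2 - (e ∩ S).card : ℕ) : ℝ))
    (bernoulliWeight_nonneg hp₀ hp₁) (sum_bernoulliWeight p)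
  calc (tau2 E : ℝ) ≤ S.card + ∑ e ∈ E, ((2 - (e ∩ S).card : ℕ) : ℝ) := by
        exact_mod_cast tau2_le_card_add_sum_repair E hE S
    _ ≤ _ := hS
    _ = _ := by
        simp_rw [mul_add, mul_sum, sum_add_distrib]
        rw [sum_comm]
        simp_rw [← mul_sum, sum_bernoulliWeight_mul_card,
          sum_bernoulliWeight_mul_two_sub_card_inter]
        rw [sum_add_distrib, ← mul_sum]

theorem one_sub_min_one_pow_le_exp (x : ℝ) (n : ℕ) :
    (1 - min x 1) ^ n ≤ Real.exp (-(n * x)) := by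
  have hle : 1 - min x 1 ≤ Real.exp (-x) := by
    rcases le_total x 1 with h | h
    · rw [min_eq_left h]; linarith [Real.add_one_le_exp (-x)]
    · rw [min_eq_right h, sub_self]; exact (Real.exp_pos _).le
  rw [neg_mul_eq_mul_neg, Real.exp_nat_mul]
  exact pow_le_pow_left₀ (by linarith [min_le_right x 1]) hle n

/-- For every constant `c > 1` and every `k`-uniform hypergraph `H` (`k ≥ 2`),
`τ₂(H) ≤ ((ln k + ln c)/(k−1))·n(H) + ((ln k + ln c)/(c(k−1)))·m(H)
  + (2/(ck))·m(H)`. -/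
theorem stmt12 (k : ℕ) (hk : 2 ≤ k) (c : ℝ) (hc : 1 < c)
    (E : Finset (Finset V)) (hu : Uniform k E) :
    (tau2 E : ℝ) ≤
      ((Real.log k + Real.log c) / ((k : ℝ) - 1)) * Fintype.card V +
      ((Real.log k + Real.log c) / (c * ((k : ℝ) - 1))) * E.card +
      (2 / (c * (k : ℝ))) * E.card := by
  have hk1 : (1 : ℝ) < k := by exact_mod_cast hk
  set p := (Real.log k + Real.log c) / ((k : ℝ) - 1)
  have hp : 0 < p := div_pos (add_pos (Real.log_pos hk1) (Real.log_pos hc)) (by linarith)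
  set q := 1 - min p 1
  have hq₀ : 0 ≤ q := by linarith [min_le_right p 1]
  have hq₁ : q ≤ 1 := by linarith [le_min hp.le zero_le_one]
  have hqk : q ^ (k - 1) ≤ 1 / (c * k) := by
    refine (one_sub_min_one_pow_le_exp p (k - 1)).trans_eq ?_
    rw [Nat.cast_sub (by omega), Nat.cast_one, mul_div_cancel₀ _ (by linarith), Real.exp_neg,
      Real.exp_add, Real.exp_log (by linarith), Real.exp_log (by linarith), one_div, mul_comm]
  have hbound := tau2_le_expected_repair_cost E (fun e he => hu e he ▸ hk)
    (le_min hp.le zero_le_one) (min_le_right p 1)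
  rw [sum_congr rfl fun e he => by rw [hu e he], sum_const, nsmul_eq_mul] at hbound
  calc (tau2 E : ℝ)
        ≤ min p 1 * Fintype.card V + E.card * (2 * q ^ k + k * (q ^ (k - 1) * min p 1)) := hbound
    _ ≤ p * Fintype.card V + E.card * (2 * (1 / (c * k)) + k * (1 / (c * k) * p)) := by
        gcongr ?_ * _ + _ * (2 * ?_ + _ * (?_ * ?_))
        · exact min_le_left p 1
        · exact (pow_le_pow_of_le_one hq₀ hq₁ (Nat.sub_le k 1)).trans hqk
        · exact min_le_left p 1
    _ = _ := by field_simp; ring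
end
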